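/- (Conditional probability 1/k² for arbitrary n.) For any n and k, if a ∈ A and b ∈ B, then k^2 times the number of admissible permutations σ with σ a = b equals the total number of admissible permutations. (When n = k^2 this specializes to the 1/n probability of Theorem 2.) -/

import Mathlib

/-!
Conjugating by transpositions, σ ↦ swap b b' * σ * swap a a', preserves admissibility (the two
swaps fix A and B setwise) and carries the permutations with σ a = b onto those with σ a' = b'.
So all k² fibres indexed by (a, b) ∈ A × B have the same size, and since an admissible σ has
exactly one pair (a, σ a) ∈ A × B, double counting shows that these fibres partition the
admissible permutations.
-/

open Finset Equiv

section

variable {α β : Type*} [DecidableEq β]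

theorem Finset.image_swap_of_mem [DecidableEq α] {s : Finset α} {a a' : α} (ha : a ∈ s)
    (ha' : a' ∈ s) : s.image (swap a a') = s :=
  coe_injective <| by
    rw [coe_image]
    exact (swap_bijOn_self (iff_of_true ha ha')).image_eq

theorem card_filter_product_apply_eq {f : α → β} (hf : f.Injective) (A : Finset α)
    (B : Finset β) : #{p ∈ A ×ˢ B | f p.1 = p.2} = #(A.image f ∩ B) := by
  refine card_bij (fun p _ => p.2) ?_ ?_ ?_
  · simp only [mem_filter, mem_product, mem_inter, mem_image]
    rintro p ⟨⟨hx, hy⟩, hp⟩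
    exact ⟨⟨p.1, hx, hp⟩, hy⟩
  · simp only [mem_filter]
    rintro p ⟨-, hp⟩ q ⟨-, hq⟩ h
    exact Prod.ext (hf (hp.trans (h.trans hq.symm))) h
  · simp only [mem_filter, mem_product, mem_inter, mem_image]
    rintro _ ⟨⟨x, hx, rfl⟩, hy⟩
    exact ⟨(x, f x), ⟨⟨hx, hy⟩, rfl⟩, rfl⟩

theorem card_image_mul_mul_inter [DecidableEq α] {A B : Finset α} {τ π : Perm α}
    (hτ : B.image τ = B) (hπ : A.image π = A) (σ : Perm α) :
    #(A.image ⇑(τ * σ * π) ∩ B) = #(A.image σ ∩ B) := by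
  calc #(A.image ⇑(τ * σ * π) ∩ B) = #((A.image σ).image τ ∩ B.image τ) := by
        rw [hτ, image_image, Perm.coe_mul, Perm.coe_mul, ← image_image, hπ]
    _ = #(A.image σ ∩ B) := by
        rw [← image_inter _ _ τ.injective, card_image_of_injective _ τ.injective]

end

section

variable {α : Type*} [Fintype α] [DecidableEq α]

def Admissible (A B : Finset α) (σ : Perm α) : Prop := #(A.image σ ∩ B) = 1

instance (A B : Finset α) : DecidablePred (Admissible A B) := fun _ =>
  inferInstanceAs (Decidable (_ = 1))

theorem card_admissible_apply_eq_eq {A B : Finset α} {a a' b b' : α} (ha : a ∈ A) (ha' : a' ∈ A)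
    (hb : b ∈ B) (hb' : b' ∈ B) :
    #{σ | Admissible A B σ ∧ σ a = b} = #{σ | Admissible A B σ ∧ σ a' = b'} := by
  refine card_equiv ((Equiv.mulLeft (swap b b')).trans (Equiv.mulRight (swap a a'))) fun σ => ?_
  rw [mem_filter_univ, mem_filter_univ]
  simp only [Equiv.trans_apply, coe_mulLeft, coe_mulRight, Admissible,
    card_image_mul_mul_inter (image_swap_of_mem hb hb') (image_swap_of_mem ha ha'),
    Perm.mul_apply, swap_apply_right, swap_apply_eq_iff]

theorem sum_card_admissible_apply_eq (A B : Finset α) :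
    ∑ p ∈ A ×ˢ B, #{σ | Admissible A B σ ∧ σ p.1 = p.2} = #{σ | Admissible A B σ} := by
  calc ∑ p ∈ A ×ˢ B, #{σ | Admissible A B σ ∧ σ p.1 = p.2}
      = ∑ p ∈ A ×ˢ B, #(({σ | Admissible A B σ} : Finset (Perm α)).bipartiteAbove
          (fun p σ => σ p.1 = p.2) p) := by
        simp only [bipartiteAbove, filter_filter]
    _ = ∑ σ ∈ ({σ | Admissible A B σ} : Finset (Perm α)), #{p ∈ A ×ˢ B | σ p.1 = p.2} :=
        sum_card_bipartiteAbove_eq_sum_card_bipartiteBelow _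
    _ = ∑ σ ∈ ({σ | Admissible A B σ} : Finset (Perm α)), 1 := by
        refine sum_congr rfl fun σ hσ => ?_
        rw [card_filter_product_apply_eq σ.injective]
        exact (mem_filter.1 hσ).2
    _ = #{σ | Admissible A B σ} := (card_eq_sum_ones _).symm

end

theorem panda_conditional_prob_k_sq (n k : ℕ) (A B : Finset (Fin n))
    (hA : A.card = k) (hB : B.card = k)
    (a b : Fin n) (ha : a ∈ A) (hb : b ∈ B) :
    k ^ 2 * (Finset.univ.filter (fun σ : Equiv.Perm (Fin n) =>
        (A.image (σ : Fin n → Fin n) ∩ B).card = 1 ∧ σ a = b)).card =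
    (Finset.univ.filter (fun σ : Equiv.Perm (Fin n) =>
        (A.image (σ : Fin n → Fin n) ∩ B).card = 1)).card := by
  calc k ^ 2 * #{σ | Admissible A B σ ∧ σ a = b}
      = ∑ p ∈ A ×ˢ B, #{σ | Admissible A B σ ∧ σ p.1 = p.2} := by
        rw [sum_congr rfl fun p hp => card_admissible_apply_eq_eq (mem_product.1 hp).1 ha
          (mem_product.1 hp).2 hb, sum_const, card_product, hA, hB, smul_eq_mul, sq]
    _ = #{σ | Admissible A B σ} := sum_card_admissible_apply_eq A B
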